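/- arXiv:1508.06773 — 5 statements merged into one kernel-verified Lean document; each statement's English description precedes it below -/
import Mathlib

section
/- For any two permutations X, Y of {1,...,n}, the squared distance Σ_{i=1}^n (log X_i − log Y_i)² is at most Σ_{i=1}^n (log i − log(n+1−i))², with equality if and only if Y_i = n+1−X_i for all i (Y is the reversal of X). -/
/-!
Put `f k = log (k + 1)`, a strictly increasing function of the rank. Reindexing by `X⁻¹` and
expanding the square, the distance is `2 ∑ f i ² - 2 ∑ f i * f (σ i)` with `σ = X⁻¹ Y`. By the
rearrangement inequality the cross sum is smallest when `σ` pairs `f` against itself in reverse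
order, i.e. for the reversal `σ = Fin.rev`, which gives the bound. Since `f` is strictly
increasing, the equality case of the rearrangement inequality forces `σ` to be antitone, and the
only antitone permutation of `Fin n` is the reversal.
-/

open Finset Equiv

theorem Equiv.Perm.eq_one_of_strictMono {ι : Type*} [LinearOrder ι] [WellFoundedLT ι]
    (σ : Perm ι) (hσ : StrictMono σ) : σ = 1 := by
  ext i
  exact congrArg (· i) (Subsingleton.elim (hσ.orderIsoOfSurjective σ σ.surjective) (.refl ι))

theorem Fin.eq_revPerm_of_antitone {n : ℕ} (σ : Perm (Fin n)) (hσ : Antitone σ) :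
    σ = Fin.revPerm := by
  have hrev : StrictMono (σ.trans Fin.revPerm) :=
    (Fin.rev_anti.comp hσ).strictMono_of_injective (σ.trans Fin.revPerm).injective
  refine Equiv.ext fun i => ?_
  simpa using congrArg (Fin.rev ∘ (· i) : Perm (Fin n) → Fin n) (Perm.eq_one_of_strictMono _ hrev)

theorem Fin.natCast_rev_add_one {R : Type*} [AddCommGroupWithOne R] {n : ℕ} (i : Fin n) :
    ((i.rev : ℕ) : R) + 1 = n - i := by
  rw [Fin.val_rev, Nat.cast_sub i.is_lt, Nat.cast_add_one, sub_add_eq_sub_sub, sub_add_cancel]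

theorem Monotone.antivary_comp_rev {α : Type*} [Preorder α] {n : ℕ} {f : Fin n → α}
    (hf : Monotone f) : Antivary f (f ∘ Fin.rev) :=
  hf.antivary (hf.comp_antitone Fin.rev_anti)

section Rearrangement

variable {α : Type*} [CommRing α]

theorem sum_sub_comp_perm_sq {ι : Type*} [Fintype ι] (f : ι → α) (σ : Perm ι) :
    ∑ i, (f i - f (σ i)) ^ 2 = 2 * (∑ i, f i ^ 2 - ∑ i, f i * f (σ i)) := by
  have hσ : ∑ i, f (σ i) ^ 2 = ∑ i, f i ^ 2 := Equiv.sum_comp σ (f · ^ 2)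
  simp only [sub_sq, sum_add_distrib, sum_sub_distrib, hσ, ← mul_sum, mul_assoc]
  ring

variable [LinearOrder α] [IsStrictOrderedRing α] {n : ℕ} {f : Fin n → α}

theorem Monotone.sum_mul_comp_rev_le (hf : Monotone f) (σ : Perm (Fin n)) :
    ∑ i, f i * f (Fin.rev i) ≤ ∑ i, f i * f (σ i) := by
  simpa using hf.antivary_comp_rev.sum_mul_le_sum_mul_comp_perm (σ := σ.trans Fin.revPerm)

theorem StrictMono.sum_mul_comp_perm_eq_iff (hf : StrictMono f) (σ : Perm (Fin n)) :
    ∑ i, f i * f (σ i) = ∑ i, f i * f (Fin.rev i) ↔ σ = Fin.revPerm := by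
  constructor
  · intro heq
    have hvary : Antivary f (f ∘ σ) := by
      simpa [Function.comp_def] using
        (hf.monotone.antivary_comp_rev.sum_mul_eq_sum_mul_comp_perm_iff
          (σ := σ.trans Fin.revPerm)).1 (by simpa using heq)
    refine Fin.eq_revPerm_of_antitone σ fun i j hij => ?_
    exact hf.le_iff_le.1 (hf.trans_antivary hvary.symm hij)
  · rintro rfl
    rfl

end Rearrangement

/-- The squared `τ` distance between two rankings is at most
`∑_{i=1}^n (log i − log(n+1−i))²`, with equality iff `Y` is the reversal of `X`
(ranks `(X i)+1` and `(Y i)+1` sum to `n+1`). -/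
theorem tau_sq_le_max (n : ℕ) (X Y : Equiv.Perm (Fin n)) :
    (∑ i : Fin n, (Real.log ((X i : ℕ) + 1) - Real.log ((Y i : ℕ) + 1)) ^ 2
      ≤ ∑ i : Fin n, (Real.log ((i : ℕ) + 1) - Real.log ((n : ℝ) - (i : ℕ))) ^ 2) ∧
    ((∑ i : Fin n, (Real.log ((X i : ℕ) + 1) - Real.log ((Y i : ℕ) + 1)) ^ 2
      = ∑ i : Fin n, (Real.log ((i : ℕ) + 1) - Real.log ((n : ℝ) - (i : ℕ))) ^ 2)
      ↔ ∀ i : Fin n, (X i : ℕ) + (Y i : ℕ) + 1 = n) := by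
  set f : Fin n → ℝ := fun i => Real.log ((i : ℕ) + 1)
  have hf : StrictMono f := fun i j hij =>
    Real.log_lt_log (by positivity) (by simpa using Fin.lt_def.1 hij)
  set σ := X.symm.trans Y
  have hdist : ∑ i, (Real.log ((X i : ℕ) + 1) - Real.log ((Y i : ℕ) + 1)) ^ 2
      = 2 * (∑ i, f i ^ 2 - ∑ i, f i * f (σ i)) := by
    rw [← sum_sub_comp_perm_sq, ← Equiv.sum_comp X fun i => (f i - f (σ i)) ^ 2]
    simp [σ, f]
  have hmax : ∑ i : Fin n, (Real.log ((i : ℕ) + 1) - Real.log ((n : ℝ) - (i : ℕ))) ^ 2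
      = 2 * (∑ i, f i ^ 2 - ∑ i, f i * f (Fin.rev i)) := by
    refine (sum_congr rfl fun i _ => ?_).trans (sum_sub_comp_perm_sq f Fin.revPerm)
    rw [← Fin.natCast_rev_add_one]
    rfl
  have hreversal : σ = Fin.revPerm ↔ ∀ i : Fin n, (X i : ℕ) + (Y i : ℕ) + 1 = n := by
    rw [Equiv.ext_iff, ← X.forall_congr_right]
    refine forall_congr' fun i => ?_
    simp only [σ, Equiv.trans_apply, Equiv.symm_apply_apply, Fin.revPerm_apply, Fin.ext_iff,
      Fin.val_rev]
    omega
  rw [hdist, hmax, ← hreversal, ← hf.sum_mul_comp_perm_eq_iff σ]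
  exact ⟨by linarith [hf.monotone.sum_mul_comp_rev_le σ], by constructor <;> intro h <;> linarith⟩
end

section
/- For a positive reciprocal n×n matrix A, the Perron eigenvalue λ_max satisfies λ_max ≥ n, with equality if and only if A is consistent. -/
/-!
Rescaling by the positive eigenvector, `B = D⁻¹ A D` with `D = diagonal w`, gives a positive
reciprocal matrix all of whose row sums equal `λ`, and which is consistent iff `A` is.
Since `b + 1/b - 2 = (b - 1)² / b`, pairing `b_ij` with `b_ji` gives
`2 (n λ - n²) = 2 (∑ b_ij - n²) = ∑ (b_ij - 1)² / b_ij ≥ 0`, with equality iff `B` is all ones.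
An all-ones matrix is consistent; conversely, if `B` is consistent then
`λ = ∑_j b_ij = b_ik ∑_j b_kj = b_ik λ`, so every `b_ik = 1`.
-/

open Finset

namespace Matrix

variable {ι : Type*}

def IsReciprocal (A : Matrix ι ι ℝ) : Prop := ∀ i j, A j i = 1 / A i j

def IsConsistent (A : Matrix ι ι ℝ) : Prop := ∀ i j k, A i k = A i j * A j k

/-- The diagonal similarity `D⁻¹ A D` with `D = diagonal w`. -/
noncomputable def rescale (A : Matrix ι ι ℝ) (w : ι → ℝ) : Matrix ι ι ℝ := of fun i j => A i j * w j / w i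

@[simp]
lemma rescale_apply (A : Matrix ι ι ℝ) (w : ι → ℝ) (i j : ι) :
    A.rescale w i j = A i j * w j / w i := rfl

lemma rescale_pos {A : Matrix ι ι ℝ} {w : ι → ℝ} (hA : ∀ i j, 0 < A i j) (hw : ∀ i, 0 < w i)
    (i j : ι) : 0 < A.rescale w i j :=
  div_pos (mul_pos (hA i j) (hw j)) (hw i)

lemma IsReciprocal.rescale {A : Matrix ι ι ℝ} (hA : A.IsReciprocal) (w : ι → ℝ) :
    (A.rescale w).IsReciprocal := by
  intro i j
  simp only [rescale_apply, hA i j, one_div_div]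
  ring

lemma rescale_mul_rescale (A : Matrix ι ι ℝ) {w : ι → ℝ} {j : ι} (hj : w j ≠ 0) (i k : ι) :
    A.rescale w i j * A.rescale w j k = A i j * A j k * w k / w i := by
  simp only [rescale_apply]
  field_simp

lemma isConsistent_rescale_iff {A : Matrix ι ι ℝ} {w : ι → ℝ} (hw : ∀ i, w i ≠ 0) :
    (A.rescale w).IsConsistent ↔ A.IsConsistent := by
  refine forall₃_congr fun i j k => ?_
  rw [rescale_mul_rescale A (hw j), rescale_apply, div_left_inj' (hw i), mul_left_inj' (hw k)]

lemma sum_rescale_eq_of_mulVec_eq_smul [Fintype ι] {A : Matrix ι ι ℝ} {w : ι → ℝ} {lam : ℝ}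
    (hw : ∀ i, w i ≠ 0) (heig : A *ᵥ w = lam • w) (i : ι) : ∑ j, A.rescale w i j = lam := by
  have hrow := congrFun heig i
  simp only [mulVec, dotProduct, Pi.smul_apply, smul_eq_mul] at hrow
  simp only [rescale_apply, ← sum_div, hrow]
  field_simp [hw i]

lemma IsReciprocal.add_swap_sub_two {B : Matrix ι ι ℝ} (hB : B.IsReciprocal) {i j : ι}
    (h : B i j ≠ 0) : B i j + B j i - 2 = (B i j - 1) ^ 2 / B i j := by
  rw [hB i j]
  field_simp
  ring

lemma IsReciprocal.two_mul_sum_sub_card_sq [Fintype ι] {B : Matrix ι ι ℝ} (hB : B.IsReciprocal)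
    (hne : ∀ i j, B i j ≠ 0) :
    2 * (∑ i, ∑ j, B i j - Fintype.card ι ^ 2) = ∑ i, ∑ j, (B i j - 1) ^ 2 / B i j := by
  have hswap : ∑ i, ∑ j, B j i = ∑ i, ∑ j, B i j := sum_comm
  simp_rw [← hB.add_swap_sub_two (hne _ _), sum_sub_distrib, sum_add_distrib, hswap]
  simp only [sum_const, card_univ, nsmul_eq_mul]
  ring

lemma IsReciprocal.card_sq_le_sum [Fintype ι] {B : Matrix ι ι ℝ} (hB : B.IsReciprocal)
    (hpos : ∀ i j, 0 < B i j) : (Fintype.card ι : ℝ) ^ 2 ≤ ∑ i, ∑ j, B i j := by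
  have hsq := hB.two_mul_sum_sub_card_sq fun i j => (hpos i j).ne'
  have : 0 ≤ ∑ i, ∑ j, (B i j - 1) ^ 2 / B i j :=
    sum_nonneg fun i _ => sum_nonneg fun j _ => div_nonneg (sq_nonneg _) (hpos i j).le
  linarith

lemma IsReciprocal.sum_eq_card_sq_iff [Fintype ι] {B : Matrix ι ι ℝ} (hB : B.IsReciprocal)
    (hpos : ∀ i j, 0 < B i j) :
    ∑ i, ∑ j, B i j = Fintype.card ι ^ 2 ↔ ∀ i j, B i j = 1 := by
  have hterm : ∀ i j, 0 ≤ (B i j - 1) ^ 2 / B i j := fun i j =>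
    div_nonneg (sq_nonneg _) (hpos i j).le
  rw [← sub_eq_zero, ← mul_eq_zero_iff_left (two_ne_zero' ℝ),
    hB.two_mul_sum_sub_card_sq fun i j => (hpos i j).ne',
    sum_eq_zero_iff_of_nonneg fun i _ => sum_nonneg fun j _ => hterm i j]
  refine forall_congr' fun i => ?_
  simp only [mem_univ, true_implies, sum_eq_zero_iff_of_nonneg fun j _ => hterm i j]
  refine forall_congr' fun j => ?_
  rw [div_eq_zero_iff, or_iff_left (hpos i j).ne', sq_eq_zero_iff, sub_eq_zero]

lemma isConsistent_iff_forall_eq_one [Fintype ι] {B : Matrix ι ι ℝ} {lam : ℝ} (hlam : lam ≠ 0)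
    (hrow : ∀ i, ∑ j, B i j = lam) : B.IsConsistent ↔ ∀ i j, B i j = 1 := by
  refine ⟨fun hB i k => ?_, fun h i j k => by simp only [h, mul_one]⟩
  have : B i k * lam = 1 * lam := calc
    B i k * lam = ∑ j, B i k * B k j := by rw [← hrow k, mul_sum]
    _ = 1 * lam := by rw [one_mul, ← hrow i]; exact sum_congr rfl fun j _ => (hB i k j).symm
  exact mul_right_cancel₀ hlam this

end Matrix

open Matrix

/-- For a positive reciprocal matrix, the Perron eigenvalue (the eigenvalue
associated with a positive eigenvector) satisfies `λ_max ≥ n`, with equality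
iff the matrix is consistent. -/
theorem perron_ge_n (n : ℕ) (hn : 0 < n) (A : Matrix (Fin n) (Fin n) ℝ)
    (hpos : ∀ i j, 0 < A i j) (hrec : ∀ i j, A j i = 1 / A i j)
    (lam : ℝ) (w : Fin n → ℝ) (hw : ∀ i, 0 < w i)
    (heig : A.mulVec w = lam • w) :
    (n : ℝ) ≤ lam ∧ (lam = n ↔ ∀ i j k, A i k = A i j * A j k) := by
  have hw0 : ∀ i, w i ≠ 0 := fun i => (hw i).ne'
  set B := A.rescale w
  have hB : B.IsReciprocal := IsReciprocal.rescale hrec w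
  have hBpos : ∀ i j, 0 < B i j := rescale_pos hpos hw
  have hrow : ∀ i, ∑ j, B i j = lam := sum_rescale_eq_of_mulVec_eq_smul hw0 heig
  have hsum : ∑ i, ∑ j, B i j = n * lam := by
    simp only [hrow, sum_const, card_univ, Fintype.card_fin, nsmul_eq_mul]
  have hn' : (0 : ℝ) < n := Nat.cast_pos.mpr hn
  have hle : (n : ℝ) ≤ lam := by
    have := hB.card_sq_le_sum hBpos
    rw [Fintype.card_fin, hsum, sq] at this
    exact le_of_mul_le_mul_left this hn'
  refine ⟨hle, ?_⟩
  calc lam = n ↔ ∑ i, ∑ j, B i j = Fintype.card (Fin n) ^ 2 := by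
        rw [hsum, Fintype.card_fin, sq, mul_right_inj' hn'.ne']
    _ ↔ ∀ i j, B i j = 1 := hB.sum_eq_card_sq_iff hBpos
    _ ↔ B.IsConsistent := (isConsistent_iff_forall_eq_one (hn'.trans_le hle).ne' hrow).symm
    _ ↔ A.IsConsistent := isConsistent_rescale_iff hw0
end

section
/- Let G = (V, E) be the graph of known entries of an incomplete pairwise comparison matrix. The logarithmic least squares problem min_w Σ_{(i,j)∈E} (log a_{ij} − log(w_i/w_j))², over positive weight vectors w normalized by Σ_i log w_i = 0, has a unique solution if and only if G is connected. -/
/-!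
Let `D y` be the vector of differences `y i - y j` over the edges, so that the objective is
`‖c - D y‖²`. By Pythagoras, the minimizers over a subspace `S` are the `y ∈ S` for which `D y` is
the orthogonal projection of `c` onto `D(S)`; they exist and form a coset of `S ⊓ ker D`, so the
minimizer is unique iff `S ⊓ ker D = 0`. A vector in `ker D` is constant on each connected
component. For connected `G` only the constants are left, and of those only `0` satisfies
`∑ y i = 0`; otherwise the indicator of a component minus its mean is a nonzero element of both.
-/

namespace Submodule

variable {F : Type*} [NormedAddCommGroup F] [InnerProductSpace ℝ F]

theorem norm_sub_sq_eq_norm_sub_starProjection_sq_add (K : Submodule ℝ F)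
    [K.HasOrthogonalProjection] (c : F) {w : F} (hw : w ∈ K) :
    ‖c - w‖ ^ 2 = ‖c - K.starProjection c‖ ^ 2 + ‖K.starProjection c - w‖ ^ 2 := by
  have hperp : inner ℝ (c - K.starProjection c) (K.starProjection c - w) = 0 :=
    K.starProjection_inner_eq_zero c _ (K.sub_mem (K.starProjection_apply_mem c) hw)
  calc ‖c - w‖ ^ 2 = ‖(c - K.starProjection c) + (K.starProjection c - w)‖ ^ 2 := by
        rw [sub_add_sub_cancel]
    _ = _ := by rw [norm_add_sq_real, hperp, mul_zero, add_zero]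

end Submodule

namespace LinearMap

variable {E F : Type*} [AddCommGroup E] [Module ℝ E] [NormedAddCommGroup F]
  [InnerProductSpace ℝ F] (D : E →ₗ[ℝ] F) (S : Submodule ℝ E) (c : F)
  [(S.map D).HasOrthogonalProjection]

theorem isMinOn_norm_sub_sq_iff {y : E} (hy : y ∈ S) :
    IsMinOn (fun z => ‖c - D z‖ ^ 2) S y ↔ D y = (S.map D).starProjection c := by
  have pythagoras := fun z (hz : z ∈ S) =>
    (S.map D).norm_sub_sq_eq_norm_sub_starProjection_sq_add c (Submodule.mem_map_of_mem hz)
  constructor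
  · intro hmin
    obtain ⟨y₀, hy₀, hDy₀⟩ := Submodule.mem_map.1 ((S.map D).starProjection_apply_mem c)
    have hle : ‖c - D y‖ ^ 2 ≤ ‖c - D y₀‖ ^ 2 := hmin hy₀
    rw [pythagoras y hy, hDy₀] at hle
    have : ‖(S.map D).starProjection c - D y‖ ^ 2 = 0 := le_antisymm (by linarith) (sq_nonneg _)
    exact (norm_sub_eq_zero_iff.1 (pow_eq_zero_iff two_ne_zero |>.1 this)).symm
  · intro hDy z hz
    show ‖c - D y‖ ^ 2 ≤ ‖c - D z‖ ^ 2
    rw [pythagoras z hz, hDy]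
    exact le_add_of_nonneg_right (sq_nonneg _)

theorem existsUnique_isMinOn_norm_sub_sq_iff :
    (∃! y, y ∈ S ∧ IsMinOn (fun z => ‖c - D z‖ ^ 2) S y) ↔ Disjoint S (ker D) := by
  simp only [fun y => and_congr_right (isMinOn_norm_sub_sq_iff D S c (y := y)), disjoint_ker]
  obtain ⟨y₀, hy₀, hDy₀⟩ := Submodule.mem_map.1 ((S.map D).starProjection_apply_mem c)
  constructor
  · rintro ⟨y, -, huniq⟩ x hx hDx
    have h1 := huniq (y₀ + x) ⟨S.add_mem hy₀ hx, by rw [map_add, hDx, add_zero, hDy₀]⟩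
    have h2 := huniq y₀ ⟨hy₀, hDy₀⟩
    simpa [← h2] using h1
  · intro hinj
    refine ⟨y₀, ⟨hy₀, hDy₀⟩, fun y ⟨hy, hDy⟩ => ?_⟩
    exact sub_eq_zero.1 (hinj _ (S.sub_mem hy hy₀) (by rw [map_sub, hDy, hDy₀, sub_self]))

end LinearMap

def sumZeroSubmodule (R V : Type*) [CommSemiring R] [Fintype V] : Submodule R (V → R) :=
  LinearMap.ker (∑ i : V, LinearMap.proj i)

@[simp]
theorem mem_sumZeroSubmodule {R V : Type*} [CommSemiring R] [Fintype V] {y : V → R} :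
    y ∈ sumZeroSubmodule R V ↔ ∑ i, y i = 0 := by
  simp [sumZeroSubmodule]

namespace SimpleGraph

variable {V : Type*} [Fintype V] (G : SimpleGraph V) [DecidableRel G.Adj]

def edgeDiff : (V → ℝ) →ₗ[ℝ] EuclideanSpace ℝ (V × V) where
  toFun y := WithLp.toLp 2 fun p => if G.Adj p.1 p.2 then y p.1 - y p.2 else 0
  map_add' y z := by
    ext p
    by_cases h : G.Adj p.1 p.2 <;> simp [h, add_sub_add_comm]
  map_smul' r y := by
    ext p
    by_cases h : G.Adj p.1 p.2 <;> simp [h, mul_sub]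

def edgeVector (c : V → V → ℝ) : EuclideanSpace ℝ (V × V) :=
  WithLp.toLp 2 fun p => if G.Adj p.1 p.2 then c p.1 p.2 else 0

theorem sum_adj_sq_eq_norm_sq (c : V → V → ℝ) (y : V → ℝ) :
    (∑ i, ∑ j, if G.Adj i j then (c i j - y i + y j) ^ 2 else 0) =
      ‖G.edgeVector c - G.edgeDiff y‖ ^ 2 := by
  rw [EuclideanSpace.norm_sq_eq, Fintype.sum_prod_type]
  refine Finset.sum_congr rfl fun i _ => Finset.sum_congr rfl fun j _ => ?_
  by_cases h : G.Adj i j <;> simp [edgeVector, edgeDiff, h, sub_add]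

theorem edgeDiff_eq_zero_iff {y : V → ℝ} :
    G.edgeDiff y = 0 ↔ ∀ i j, G.Reachable i j → y i = y j := by
  classical
  rw [← lapMatrix_mulVec_eq_zero_iff_forall_reachable, lapMatrix_mulVec_eq_zero_iff_forall_adj]
  refine ⟨fun h i j hij => ?_, fun h => ?_⟩
  · simpa [edgeDiff, hij, sub_eq_zero] using congr($h (i, j))
  · ext p
    by_cases hp : G.Adj p.1 p.2
    · simp [edgeDiff, hp, h _ _ hp]
    · simp [edgeDiff, hp]

theorem disjoint_sumZeroSubmodule_ker_edgeDiff_iff [Nonempty V] :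
    Disjoint (sumZeroSubmodule ℝ V) (LinearMap.ker G.edgeDiff) ↔ G.Connected := by
  simp only [LinearMap.disjoint_ker, mem_sumZeroSubmodule, edgeDiff_eq_zero_iff]
  constructor
  · intro hinj
    classical
    obtain ⟨u⟩ := ‹Nonempty V›
    refine (connected_iff_exists_forall_reachable G).2 ⟨u, fun v => ?_⟩
    by_contra huv
    let k : V → ℝ := fun i => if G.Reachable u i then 1 else 0
    let y : V → ℝ := fun i => k i - (∑ j, k j) / Fintype.card V
    have hsum : ∑ i, y i = 0 := by
      simp only [y, Finset.sum_sub_distrib, Finset.sum_const, Finset.card_univ, nsmul_eq_mul]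
      field_simp
      ring
    have hk : ∀ i j, G.Reachable i j → y i = y j := fun i j hij => by
      have hreach : G.Reachable u i ↔ G.Reachable u j := ⟨(·.trans hij), (·.trans hij.symm)⟩
      simp only [y, k, hreach]
    have hu := congr_fun (hinj y hsum hk) u
    have hv := congr_fun (hinj y hsum hk) v
    simp only [y, k, Reachable.rfl, huv, if_true, if_false, Pi.zero_apply] at hu hv
    linarith
  · intro hconn y hsum hy
    obtain ⟨i₀⟩ := ‹Nonempty V›
    have hconst : ∀ i, y i = y i₀ := fun i => hy i i₀ (hconn i i₀)
    have : (Fintype.card V : ℝ) * y i₀ = 0 := by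
      simpa [hconst] using hsum
    funext i
    rw [hconst, Pi.zero_apply]
    exact (mul_eq_zero.1 this).resolve_left (by positivity)

end SimpleGraph

theorem llsm_unique_iff_connected_general (n : ℕ) (hn : 0 < n)
    (G : SimpleGraph (Fin n)) [DecidableRel G.Adj]
    (a : Fin n → Fin n → ℝ) :
    (∃! y : Fin n → ℝ, (∑ i, y i = 0) ∧
        ∀ z : Fin n → ℝ, (∑ i, z i = 0) →
          (∑ i, ∑ j, if G.Adj i j then (Real.log (a i j) - y i + y j) ^ 2 else 0)
            ≤ (∑ i, ∑ j, if G.Adj i j then (Real.log (a i j) - z i + z j) ^ 2 else 0))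
      ↔ G.Connected := by
  have : Nonempty (Fin n) := ⟨⟨0, hn⟩⟩
  rw [← G.disjoint_sumZeroSubmodule_ker_edgeDiff_iff,
    ← LinearMap.existsUnique_isMinOn_norm_sub_sq_iff G.edgeDiff (sumZeroSubmodule ℝ _) (G.edgeVector fun i j => Real.log (a i j))]
  simp only [isMinOn_iff, SetLike.mem_coe, mem_sumZeroSubmodule,
    SimpleGraph.sum_adj_sq_eq_norm_sq]

/-- The incomplete-LLSM problem: minimize
`∑_{(i,j)∈E} (log a_{ij} − y_i + y_j)²` over `y = log w` with `∑ y_i = 0`.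
It has a unique solution iff the graph `G` of known entries is connected. -/
theorem llsm_unique_iff_connected (n : ℕ) (hn : 0 < n)
    (G : SimpleGraph (Fin n)) [DecidableRel G.Adj]
    (a : Fin n → Fin n → ℝ)
    (hapos : ∀ i j, G.Adj i j → 0 < a i j)
    (harec : ∀ i j, G.Adj i j → a i j * a j i = 1) :
    (∃! y : Fin n → ℝ, (∑ i, y i = 0) ∧
        ∀ z : Fin n → ℝ, (∑ i, z i = 0) →
          (∑ i, ∑ j, if G.Adj i j then (Real.log (a i j) - y i + y j) ^ 2 else 0)
            ≤ (∑ i, ∑ j, if G.Adj i j then (Real.log (a i j) - z i + z j) ^ 2 else 0))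
      ↔ G.Connected :=
  llsm_unique_iff_connected_general n hn G a
end

section
/- If two alternatives i and j occupy adjacent ranks k and k+1 in ranking Y but are swapped relative to ranking X, then the contribution of this swap to τ², namely 2(log(k+1) − log k)·|log X_j − log X_i| when X agrees elsewhere, is strictly decreasing in k; in particular a swap of ranks 1 and 2 contributes 2(log 2)² to τ² while a swap of ranks k and k+1 (both rankings otherwise equal) contributes 2(log((k+1)/k))², which is strictly decreasing in k. -/
/-- A swap of adjacent ranks `k, k+1` (both rankings otherwise equal)
contributes `2(log((k+1)/k))²` to `τ²`; this contribution is strictly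
decreasing in `k`, and a swap of ranks `1` and `2` contributes `2(log 2)²`. -/
theorem adjacent_swap_contribution_decreasing :
    (∀ k l : ℕ, 1 ≤ k → k < l →
      2 * (Real.log (((l : ℝ) + 1) / l)) ^ 2
        < 2 * (Real.log (((k : ℝ) + 1) / k)) ^ 2) ∧
    2 * (Real.log (((1 : ℝ) + 1) / 1)) ^ 2 = 2 * (Real.log 2) ^ 2 := by
  constructor
  · intro k l hk hkl
    have hk0 : (0 : ℝ) < k := by positivity
    have hl0 : (0 : ℝ) < l := by
      have : (0 : ℝ) < k := hk0
      have : (k : ℝ) < l := by exact_mod_cast hkl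
      linarith
    have h1 : (1 : ℝ) < ((l : ℝ) + 1) / l := by
      rw [lt_div_iff₀ hl0]; linarith
    have h2 : ((l : ℝ) + 1) / l < ((k : ℝ) + 1) / k := by
      rw [div_lt_div_iff₀ hl0 hk0]
      have hkl' : (k : ℝ) < l := by exact_mod_cast hkl
      nlinarith
    have hlogpos : 0 < Real.log (((l : ℝ) + 1) / l) := Real.log_pos h1
    have hloglt : Real.log (((l : ℝ) + 1) / l) < Real.log (((k : ℝ) + 1) / k) :=
      Real.log_lt_log (by linarith) h2
    have := pow_lt_pow_left₀ hloglt hlogpos.le (n := 2) (by norm_num)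
    nlinarith
  · norm_num
end

section
/- Let X and Y be permutations of {1,...,n} and suppose indices i, j satisfy X_i < X_j and Y_i < Y_j. Let Z be Y with the values at i and j swapped (Z_i = Y_j, Z_j = Y_i, Z_k = Y_k otherwise). Then τ(X,Z) ≥ τ(X,Y). -/
/-! Only the two coordinates `i` and `j` change. With `a ≤ c` the logarithmic ranks of `X` and
`b ≤ d` those of `Y` there, the two sums differ by
`(a - d)² + (c - b)² - (a - b)² - (c - d)² = 2 (c - a) (d - b) ≥ 0`. -/

open Finset

theorem sq_sub_add_sq_sub_le_of_le {R : Type*} [CommRing R] [LinearOrder R] [IsStrictOrderedRing R]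
    {a b c d : R} (hac : a ≤ c) (hbd : b ≤ d) :
    (a - b) ^ 2 + (c - d) ^ 2 ≤ (a - d) ^ 2 + (c - b) ^ 2 := by
  nlinarith [mul_nonneg (sub_nonneg.mpr hac) (sub_nonneg.mpr hbd)]

theorem sum_sq_sub_le_sum_sq_sub_comp_swap {ι R : Type*} [Fintype ι] [DecidableEq ι]
    [CommRing R] [LinearOrder R] [IsStrictOrderedRing R] (f g : ι → R) {i j : ι}
    (hf : f i ≤ f j) (hg : g i ≤ g j) :
    ∑ k, (f k - g k) ^ 2 ≤ ∑ k, (f k - g (Equiv.swap i j k)) ^ 2 := by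
  rcases eq_or_ne i j with rfl | hij
  · simp
  have hsub : ({i, j} : Finset ι) ⊆ univ := subset_univ _
  have hoff : ∀ k ∈ univ \ {i, j}, (f k - g k) ^ 2 = (f k - g (Equiv.swap i j k)) ^ 2 := by
    intro k hk
    simp only [mem_sdiff, mem_insert, mem_singleton, not_or] at hk
    rw [Equiv.swap_apply_of_ne_of_ne hk.2.1 hk.2.2]
  rw [← sum_sdiff hsub, ← sum_sdiff hsub, sum_congr rfl hoff, sum_pair hij, sum_pair hij,
    Equiv.swap_apply_left, Equiv.swap_apply_right]
  exact add_le_add_right (sq_sub_add_sq_sub_le_of_le hf hg) _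

theorem log_succ_le_log_succ {n : ℕ} {a b : Fin n} (h : a ≤ b) :
    Real.log ((a : ℕ) + 1) ≤ Real.log ((b : ℕ) + 1) :=
  Real.log_le_log (by positivity) (by gcongr; exact_mod_cast h)

/-- Swapping a concordant pair in one ranking weakly increases the `τ`
distance: if `X i < X j` and `Y i < Y j`, and `Z` is `Y` with the values at
`i` and `j` exchanged, then `τ(X,Y) ≤ τ(X,Z)`. -/
theorem tau_swap_concordant (n : ℕ) (X Y : Equiv.Perm (Fin n)) (i j : Fin n)
    (hX : X i < X j) (hY : Y i < Y j) :
    Real.sqrt (∑ k : Fin n,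
        (Real.log ((X k : ℕ) + 1) - Real.log ((Y k : ℕ) + 1)) ^ 2)
      ≤ Real.sqrt (∑ k : Fin n,
        (Real.log ((X k : ℕ) + 1) - Real.log ((Y (Equiv.swap i j k) : ℕ) + 1)) ^ 2) :=
  Real.sqrt_le_sqrt <| sum_sq_sub_le_sum_sq_sub_comp_swap
    (fun k ↦ Real.log ((X k : ℕ) + 1)) (fun k ↦ Real.log ((Y k : ℕ) + 1))
    (log_succ_le_log_succ hX.le) (log_succ_le_log_succ hY.le)
end
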